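/- arXiv:1304.6628 — 4 statements merged into one kernel-verified Lean document; each statement's English description precedes it below -/
import Mathlib

section
/- Let X be a Tychonoff space, {xₙ : n ∈ ℕ} a closed discrete countable subset of X. For each n let Hₙ = {f ∈ C(X) : f(x_k) = 0 for all k ≥ n} and H = ⋃ₙ Hₙ. Then H is closed in C(X) with the graph topology. -/
/-- The basic set `B(f,ε)` of the graph topology on `C(X,ℝ)`. -/
def gball {X : Type*} [TopologicalSpace X] (f : C(X, ℝ)) (ε : X → ℝ) : Set C(X, ℝ) :=
  {g | ∀ x, |f x - g x| < ε x}

/-- The graph topology on `C(X,ℝ)`, generated by the sets `B(f,ε)` with `ε` strictly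
positive and lower semicontinuous. -/
def graphTop (X : Type*) [TopologicalSpace X] : TopologicalSpace C(X, ℝ) :=
  TopologicalSpace.generateFrom
    {S | ∃ (f : C(X, ℝ)) (ε : X → ℝ),
      LowerSemicontinuous ε ∧ (∀ x, 0 < ε x) ∧ S = gball f ε}

theorem stmt6 {X : Type*} [TopologicalSpace X] [T1Space X] [CompletelyRegularSpace X]
    (x : ℕ → X) (hinj : Function.Injective x) (hcl : IsClosed (Set.range x))
    (hd : DiscreteTopology (Set.range x)) :
    @IsClosed C(X, ℝ) (graphTop X)
      (⋃ n : ℕ, {f : C(X, ℝ) | ∀ k ≥ n, f (x k) = 0}) := by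
  classical
  letI : TopologicalSpace C(X, ℝ) := graphTop X
  rw [← isOpen_compl_iff]
  -- any subset of the closed discrete set `range x` is closed
  have hsub : ∀ A : Set X, A ⊆ Set.range x → IsClosed A := by
    intro A hA
    have h1 : IsClosed ((↑) ⁻¹' A : Set (Set.range x)) := isClosed_discrete _
    have h2 := hcl.isClosedEmbedding_subtypeVal.isClosedMap _ h1
    rwa [Subtype.image_preimage_coe, Set.inter_eq_self_of_subset_right hA] at h2
  rw [isOpen_iff_forall_mem_open]
  intro f hf
  simp only [Set.mem_compl_iff, Set.mem_iUnion, Set.mem_setOf_eq, not_exists, not_forall] at hf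
  set T : Set X := {y | y ∈ Set.range x ∧ 0 < |f y| ∧ |f y| < 1} with hT
  set ε : X → ℝ := fun y => if y ∈ T then |f y| else 1 with hε
  have hεpos : ∀ y, 0 < ε y := by
    intro y
    by_cases h : y ∈ T
    · simp only [hε, if_pos h]; exact h.2.1
    · simp only [hε, if_neg h]; norm_num
  have hεlsc : LowerSemicontinuous ε := by
    rw [lowerSemicontinuous_iff_isOpen_preimage]
    intro c
    rcases lt_or_ge c 1 with hc | hc
    · rw [← isClosed_compl_iff]
      have heq : (ε ⁻¹' Set.Ioi c)ᶜ = {y | y ∈ T ∧ |f y| ≤ c} := by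
        ext y
        simp only [Set.mem_compl_iff, Set.mem_preimage, Set.mem_Ioi, not_lt, Set.mem_setOf_eq]
        by_cases h : y ∈ T
        · simp only [hε, if_pos h]
          exact ⟨fun hle => ⟨h, hle⟩, fun hy => hy.2⟩
        · simp only [hε, if_neg h]
          exact iff_of_false hc.not_ge fun hy => h hy.1
      rw [heq]
      exact hsub _ fun y hy => hy.1.1
    · have heq : ε ⁻¹' Set.Ioi c = ∅ := by
        ext y
        simp only [Set.mem_preimage, Set.mem_Ioi, Set.mem_empty_iff_false, iff_false, not_lt]
        by_cases h : y ∈ T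
        · simp only [hε, if_pos h]; exact le_trans h.2.2.le hc
        · simp only [hε, if_neg h]; exact hc
      rw [heq]; exact isOpen_empty
  have hkey : ∀ k, f (x k) ≠ 0 → ε (x k) ≤ |f (x k)| := by
    intro k hk
    by_cases h : x k ∈ T
    · simp [hε, h]
    · simp only [hε, if_neg h]
      by_contra h'
      push_neg at h'
      exact h ⟨⟨k, rfl⟩, abs_pos.mpr hk, h'⟩
  refine ⟨gball f ε, ?_, TopologicalSpace.isOpen_generateFrom_of_mem ⟨f, ε, hεlsc, hεpos, rfl⟩, ?_⟩
  · intro g hg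
    simp only [Set.mem_compl_iff, Set.mem_iUnion, Set.mem_setOf_eq, not_exists, not_forall]
    intro n
    obtain ⟨k, hkn, hk⟩ := hf n
    refine ⟨k, hkn, ?_⟩
    intro hg0
    have := hg (x k)
    rw [hg0, sub_zero] at this
    exact absurd (lt_of_lt_of_le this (hkey k hk)) (lt_irrefl _)
  · intro y
    simpa using hεpos y
end

section
/- If X is a Tychonoff space such that C(X) with the graph topology is hereditarily Baire (every nonempty closed subspace is a Baire space), then X is countably compact. -/
/-- A space is countably compact if every countable open cover has a finite subcover. -/
def CountablyCompact (X : Type*) [TopologicalSpace X] : Prop :=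
  ∀ U : ℕ → Set X, (∀ n, IsOpen (U n)) → (⋃ n, U n) = Set.univ →
    ∃ s : Finset ℕ, (⋃ n ∈ s, U n) = Set.univ

/-!
If `X` is not countably compact, it contains a locally finite sequence of points `xₙ`.
Let `F ⊆ C(X)` be the functions vanishing at all but finitely many `xₙ`. It is closed in the
graph topology: for `f ∉ F` the set `D` of those `xₙ` with `f xₙ ≠ 0` is closed by local
finiteness, so the radius `|f| + 1_{Dᶜ}` is lower semicontinuous and its graph ball misses `F`.
Now `F` is the union of the closed sets `Fₖ` of functions vanishing at every `xₙ` with `n ≥ k`,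
and each `Fₖ` has empty interior in `F`: a small bump at some `xₘ` (`m ≥ k`, `f xₘ = 0`),
supported in a neighbourhood containing only finitely many `xₙ`, leaves `Fₖ` but stays in `F`
and in any prescribed graph ball. Hence the nonempty closed subspace `F` is not Baire.
-/

open Topology Filter

section GraphTopology

variable {X : Type*} [TopologicalSpace X]

theorem isOpen_gball {f : C(X, ℝ)} {ε : X → ℝ} (hε : LowerSemicontinuous ε)
    (hεpos : ∀ x, 0 < ε x) : IsOpen[graphTop X] (gball f ε) :=
  TopologicalSpace.isOpen_generateFrom_of_mem ⟨f, ε, hε, hεpos, rfl⟩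

theorem gball_sub_dist_subset_gball {f f' : C(X, ℝ)} {ε : X → ℝ} :
    gball f (fun x => ε x - |f' x - f x|) ⊆ gball f' ε := fun g hg x => by
  have := hg x
  have := abs_sub_le (f' x) (f x) (g x)
  dsimp only at *
  linarith

theorem exists_gball_subset_of_isOpen {O : Set C(X, ℝ)} (hO : IsOpen[graphTop X] O)
    {f : C(X, ℝ)} (hf : f ∈ O) :
    ∃ ε : X → ℝ, LowerSemicontinuous ε ∧ (∀ x, 0 < ε x) ∧ gball f ε ⊆ O := by
  induction hO generalizing f with
  | basic s hs =>
    obtain ⟨f', ε, hε, -, rfl⟩ := hs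
    refine ⟨fun x => ε x - |f' x - f x|, ?_, fun x => sub_pos.2 (hf x),
      gball_sub_dist_subset_gball⟩
    exact hε.add (map_continuous (f' - f)).abs.neg.lowerSemicontinuous
  | univ => exact ⟨fun _ => 1, lowerSemicontinuous_const, fun _ => one_pos, Set.subset_univ _⟩
  | inter s t _ _ ihs iht =>
    obtain ⟨ε, hε, hεpos, hεs⟩ := ihs hf.1
    obtain ⟨δ, hδ, hδpos, hδt⟩ := iht hf.2
    refine ⟨fun x => ε x ⊓ δ x, hε.inf hδ, fun x => lt_inf_iff.2 ⟨hεpos x, hδpos x⟩,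
      fun g hg => ⟨hεs fun x => ?_, hδt fun x => ?_⟩⟩
    · exact (hg x).trans_le inf_le_left
    · exact (hg x).trans_le inf_le_right
  | sUnion S _ ih =>
    obtain ⟨s, hsS, hfs⟩ := hf
    obtain ⟨ε, hε, hεpos, hεs⟩ := ih s hsS hfs
    exact ⟨ε, hε, hεpos, hεs.trans (Set.subset_sUnion_of_mem hsS)⟩

theorem isOpen_setOf_forall_ne_zero {D : Set X} (hD : IsClosed D) :
    IsOpen[graphTop X] {g : C(X, ℝ) | ∀ y ∈ D, g y ≠ 0} := by
  refine @isOpen_iff_forall_mem_open _ (graphTop X) _ |>.2 fun f hf => ?_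
  set ε : X → ℝ := fun x => |f x| + Dᶜ.indicator 1 x
  have hεpos : ∀ x, 0 < ε x := by
    intro x
    by_cases hx : x ∈ D
    · simpa [ε, hx] using hf x hx
    · simp only [ε, Set.indicator_of_mem (Set.mem_compl hx), Pi.one_apply]
      positivity
  have hε : LowerSemicontinuous ε :=
    (map_continuous f).abs.lowerSemicontinuous.add
      (hD.isOpen_compl.lowerSemicontinuous_indicator zero_le_one)
  refine ⟨gball f ε, fun g hg y hy hgy => ?_, isOpen_gball hε hεpos, by simpa [gball] using hεpos⟩
  have := hg y
  simp [ε, hy, hgy] at this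

theorem isClosed_setOf_apply_eq_zero [T1Space X] (y : X) :
    IsClosed[graphTop X] {g : C(X, ℝ) | g y = 0} :=
  (@isOpen_compl_iff _ _ (graphTop X)).1 <| by
    simpa [Set.compl_ofPred] using isOpen_setOf_forall_ne_zero (isClosed_singleton (x := y))

-- A bump of height `ε y / 2` at `y`, supported where `ε > ε y / 2`, stays inside the graph ball.
theorem exists_mem_gball_ne_of_mem_nhds [CompletelyRegularSpace X] (f : C(X, ℝ)) {ε : X → ℝ}
    (hε : LowerSemicontinuous ε) (hεpos : ∀ x, 0 < ε x) {y : X} {W : Set X} (hW : W ∈ 𝓝 y) :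
    ∃ g ∈ gball f ε, g y ≠ f y ∧ ∀ z ∉ W, g z = f z := by
  set c := ε y / 2
  have hc : 0 < c := half_pos (hεpos y)
  set V := interior W ∩ {z | c < ε z}
  have hyV : y ∈ V := ⟨mem_interior_iff_mem_nhds.2 hW, half_lt_self (hεpos y)⟩
  obtain ⟨φ, hφ, hφy, hφV⟩ := CompletelyRegularSpace.completely_regular_isOpen y V
    (isOpen_interior.inter (hε.isOpen_preimage c)) hyV
  have hφ_off : ∀ z ∉ V, (φ z : ℝ) = 1 := fun z hz => congrArg Subtype.val (hφV hz)
  let g : C(X, ℝ) := f + c • ⟨fun z => 1 - φ z, by fun_prop⟩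
  have hg : ∀ z, g z = f z + c * (1 - φ z) := fun _ => rfl
  refine ⟨g, fun z => ?_, by simp [hg, hφy, hc.ne'], fun z hz => ?_⟩
  · have h0 := (φ z).2.1
    have h1 := (φ z).2.2
    rw [hg, sub_add_cancel_left, abs_neg, abs_of_nonneg (by nlinarith)]
    by_cases hz : z ∈ V
    · have hcz : c < ε z := hz.2
      have := mul_nonneg hc.le h0
      linarith
    · simpa [hφ_off z hz] using hεpos z
  · simp [hg, hφ_off z fun hzV => hz (interior_subset hzV.1)]

end GraphTopology

theorem exists_isOpen_inter_subset_of_iUnion_of_closed {Y : Type*} [TopologicalSpace Y]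
    {F : Set Y} [BaireSpace F] (hF : F.Nonempty) {K : ℕ → Set Y} (hK : ∀ k, IsClosed (K k))
    (hFK : F ⊆ ⋃ k, K k) : ∃ k U, IsOpen U ∧ (F ∩ U).Nonempty ∧ F ∩ U ⊆ K k := by
  have : Nonempty F := hF.to_subtype
  obtain ⟨k, p, hp⟩ := nonempty_interior_of_iUnion_of_closed
    (f := fun k => ((↑) : F → Y) ⁻¹' K k) (fun k => (hK k).preimage continuous_subtype_val)
    (Set.eq_univ_of_forall fun p => by simpa using hFK p.2)
  obtain ⟨U, hU, hUint⟩ := isOpen_induced_iff.1 (isOpen_interior (s := ((↑) : F → Y) ⁻¹' K k))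
  refine ⟨k, U, hU, ⟨p, p.2, ?_⟩, fun z hz => ?_⟩
  · simpa [← hUint] using hp
  · exact interior_subset (s := ((↑) : F → Y) ⁻¹' K k) (hUint ▸ hz.2 : (⟨z, hz.1⟩ : F) ∈ _)

theorem exists_locallyFinite_singleton_of_not_countablyCompact {X : Type*} [TopologicalSpace X]
    (hX : ¬CountablyCompact X) : ∃ x : ℕ → X, LocallyFinite fun n => {x n} := by
  simp only [CountablyCompact, not_forall, not_exists, exists_prop] at hX
  obtain ⟨U, hU, hcover, hfin⟩ := hX
  have : ∀ n, ∃ y, ∀ i ≤ n, y ∉ U i := fun n => by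
    simpa [Set.eq_univ_iff_forall, Nat.lt_succ_iff] using hfin (Finset.range (n + 1))
  choose x hx using this
  refine ⟨x, fun y => ?_⟩
  obtain ⟨m, hm⟩ := Set.mem_iUnion.1 (hcover ▸ Set.mem_univ y)
  refine ⟨U m, (hU m).mem_nhds hm, (Set.finite_Iio m).subset fun n hn => ?_⟩
  by_contra hnm
  exact hx n m (not_lt.1 hnm) (Set.singleton_inter_nonempty.1 hn)

section Sequence

variable {X : Type*} [TopologicalSpace X] (x : ℕ → X)

def eventuallyZeroAlong : Set C(X, ℝ) := {f | ∀ᶠ n in atTop, f (x n) = 0}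

def zeroAlongFrom (k : ℕ) : Set C(X, ℝ) := {f | ∀ n ≥ k, f (x n) = 0}

variable {x}

theorem eventuallyZeroAlong_subset_iUnion : eventuallyZeroAlong x ⊆ ⋃ k, zeroAlongFrom x k :=
  fun _ hf => Set.mem_iUnion.2 (eventually_atTop.1 hf)

theorem exists_mem_gball_mem_eventuallyZeroAlong_notMem_zeroAlongFrom [CompletelyRegularSpace X]
    (hx : LocallyFinite fun n => {x n}) {f : C(X, ℝ)} (hf : f ∈ eventuallyZeroAlong x) (k : ℕ)
    {ε : X → ℝ} (hε : LowerSemicontinuous ε) (hεpos : ∀ x, 0 < ε x) :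
    ∃ g ∈ gball f ε, g ∈ eventuallyZeroAlong x ∧ g ∉ zeroAlongFrom x k := by
  obtain ⟨m, hfm, hkm⟩ := (hf.and (eventually_ge_atTop k)).exists
  obtain ⟨W, hW, hWfin⟩ := hx (x m)
  obtain ⟨g, hg, hgm, hgW⟩ := exists_mem_gball_ne_of_mem_nhds f hε hεpos hW
  refine ⟨g, hg, ?_, fun hgk => hgm (by rw [hgk m hkm, hfm])⟩
  have hxW : ∀ᶠ n in atTop, x n ∉ W := by
    rw [← Nat.cofinite_eq_atTop]
    exact hWfin.eventually_cofinite_notMem.mono fun n hn hnW => hn ⟨x n, rfl, hnW⟩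
  filter_upwards [hf, hxW] with n hfn hnW
  rw [hgW _ hnW, hfn]

variable [T1Space X]

theorem isClosed_zeroAlongFrom (k : ℕ) : IsClosed[graphTop X] (zeroAlongFrom x k) := by
  simp only [zeroAlongFrom, Set.ofPred_forall]
  exact @isClosed_iInter _ _ (graphTop X) _ fun n =>
    @isClosed_iInter _ _ (graphTop X) _ fun _ => isClosed_setOf_apply_eq_zero (x n)

theorem isClosed_eventuallyZeroAlong (hx : LocallyFinite fun n => {x n}) :
    IsClosed[graphTop X] (eventuallyZeroAlong x) := by
  refine (@isOpen_compl_iff _ _ (graphTop X)).1 <|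
    (@isOpen_iff_forall_mem_open _ (graphTop X) _).2 fun f hf => ?_
  set D := ⋃ n, {x n} ∩ {y | f y ≠ 0}
  have hD : IsClosed D := (hx.subset fun n => Set.inter_subset_left).isClosed_iUnion
    fun n => ((Set.finite_singleton _).subset Set.inter_subset_left).isClosed
  refine ⟨_, fun g hg hgF => hf ?_, isOpen_setOf_forall_ne_zero hD, fun y hy => ?_⟩
  · exact hgF.mono fun n hgn => by_contra fun hfn => hg (x n) (Set.mem_iUnion.2 ⟨n, rfl, hfn⟩) hgn
  · obtain ⟨n, -, hfy⟩ := Set.mem_iUnion.1 hy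
    exact hfy

end Sequence

theorem stmt8 {X : Type*} [TopologicalSpace X] [T1Space X] [CompletelyRegularSpace X]
    (h : ∀ F : Set C(X, ℝ), F.Nonempty → @IsClosed C(X, ℝ) (graphTop X) F →
      @BaireSpace F (TopologicalSpace.induced Subtype.val (graphTop X))) :
    CountablyCompact X := by
  by_contra hX
  obtain ⟨x, hx⟩ := exists_locallyFinite_singleton_of_not_countablyCompact hX
  have hne : (eventuallyZeroAlong x).Nonempty := ⟨0, Eventually.of_forall fun _ => rfl⟩
  obtain ⟨k, U, hU, ⟨f, hfF, hfU⟩, hUk⟩ :=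
    @exists_isOpen_inter_subset_of_iUnion_of_closed _ (graphTop X) _
      (h _ hne (isClosed_eventuallyZeroAlong hx)) hne _ isClosed_zeroAlongFrom
      eventuallyZeroAlong_subset_iUnion
  obtain ⟨ε, hε, hεpos, hεU⟩ := exists_gball_subset_of_isOpen hU hfU
  obtain ⟨g, hg, hgF, hgk⟩ :=
    exists_mem_gball_mem_eventuallyZeroAlong_notMem_zeroAlongFrom hx hfF k hε hεpos
  exact hgk (hUk ⟨hgF, hεU hg⟩)
end

section
/- If X is a countably compact Tychonoff space, then C(X) with the graph topology is completely metrizable: the graph topology coincides with the topology induced by the supremum metric d(f,g) = min(1, sup_x |f(x) − g(x)|), and this metric is complete on C(X). -/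
section Aux

variable {X : Type*} [TopologicalSpace X]

lemma bdd_of_cc (hX : CountablyCompact X) {h : X → ℝ} (hc : Continuous h) :
    ∃ C : ℝ, ∀ x, h x ≤ C := by
  obtain ⟨s, hs⟩ := hX (fun n => h ⁻¹' Set.Iio n)
    (fun n => isOpen_Iio.preimage hc)
    (by
      ext x
      simp only [Set.mem_iUnion, Set.mem_preimage, Set.mem_Iio, Set.mem_univ, iff_true]
      exact exists_nat_gt (h x))
  refine ⟨(s.sup id : ℕ), fun x => ?_⟩
  have hx : x ∈ ⋃ n ∈ s, h ⁻¹' Set.Iio (n : ℝ) := hs ▸ Set.mem_univ x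
  simp only [Set.mem_iUnion, Set.mem_preimage, Set.mem_Iio] at hx
  obtain ⟨n, hn, hlt⟩ := hx
  exact hlt.le.trans (by exact_mod_cast Finset.le_sup (f := id) hn)

lemma lsc_pos_bound (hX : CountablyCompact X) {ε : X → ℝ}
    (hl : LowerSemicontinuous ε) (hp : ∀ x, 0 < ε x) :
    ∃ c : ℝ, 0 < c ∧ ∀ x, c ≤ ε x := by
  obtain ⟨s, hs⟩ := hX (fun n => ε ⁻¹' Set.Ioi (1 / (n + 1)))
    (fun n => hl.isOpen_preimage _)
    (by
      ext x
      simp only [Set.mem_iUnion, Set.mem_preimage, Set.mem_Ioi, Set.mem_univ, iff_true]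
      obtain ⟨n, hn⟩ := exists_nat_one_div_lt (hp x)
      exact ⟨n, by exact_mod_cast hn⟩)
  refine ⟨1 / ((s.sup id : ℕ) + 1), by positivity, fun x => ?_⟩
  have hx : x ∈ ⋃ n ∈ s, ε ⁻¹' Set.Ioi (1 / ((n : ℝ) + 1)) := hs ▸ Set.mem_univ x
  simp only [Set.mem_iUnion, Set.mem_preimage, Set.mem_Ioi] at hx
  obtain ⟨n, hn, hlt⟩ := hx
  have h1 : (1 : ℝ) / ((s.sup id : ℕ) + 1) ≤ 1 / ((n : ℝ) + 1) := by
    apply one_div_le_one_div_of_le (by positivity)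
    have : (n : ℝ) ≤ (s.sup id : ℕ) := by exact_mod_cast Finset.le_sup (f := id) hn
    linarith
  linarith

lemma lt_of_min_one_lt {D c : ℝ} (h : min 1 D < c) (hc : c ≤ 1) : D < c := by
  rcases le_total 1 D with h1 | h1
  · rw [min_eq_left h1] at h; linarith
  · rwa [min_eq_right h1] at h

section D
variable [Nonempty X]

lemma D_bddAbove (hX : CountablyCompact X) (f g : C(X, ℝ)) :
    BddAbove (Set.range fun x => |f x - g x|) := by
  obtain ⟨C, hC⟩ := bdd_of_cc hX ((f.continuous.sub g.continuous).abs)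
  exact ⟨C, Set.forall_mem_range.2 hC⟩

lemma le_D (hX : CountablyCompact X) (f g : C(X, ℝ)) (x : X) :
    |f x - g x| ≤ ⨆ x, |f x - g x| :=
  le_ciSup (D_bddAbove hX f g) x

lemma D_nonneg (hX : CountablyCompact X) (f g : C(X, ℝ)) : 0 ≤ ⨆ x, |f x - g x| :=
  le_trans (abs_nonneg _) (le_D hX f g (Classical.arbitrary X))

lemma D_comm (f g : C(X, ℝ)) : (⨆ x, |f x - g x|) = ⨆ x, |g x - f x| := by
  simp only [abs_sub_comm]

lemma D_triangle (hX : CountablyCompact X) (f g h : C(X, ℝ)) :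
    (⨆ x, |f x - h x|) ≤ (⨆ x, |f x - g x|) + ⨆ x, |g x - h x| := by
  refine ciSup_le fun x => ?_
  calc |f x - h x| ≤ |f x - g x| + |g x - h x| := abs_sub_le _ _ _
    _ ≤ _ := add_le_add (le_D hX f g x) (le_D hX g h x)

lemma min_triangle' {a b c : ℝ} (ha : 0 ≤ a) (hb : 0 ≤ b) (hc : c ≤ a + b) :
    min 1 c ≤ min 1 a + min 1 b := by
  rcases le_total 1 a with h | h
  · have h2 : (0:ℝ) ≤ min 1 b := le_min (by norm_num) hb
    have h3 : min (1:ℝ) a = 1 := min_eq_left h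
    linarith [min_le_left (1:ℝ) c]
  · rcases le_total 1 b with h' | h'
    · have h3 : min (1:ℝ) b = 1 := min_eq_left h'
      have h2 : (0:ℝ) ≤ min 1 a := le_min (by norm_num) ha
      linarith [min_le_left (1:ℝ) c]
    · rw [min_eq_right h, min_eq_right h']
      exact le_trans (min_le_right _ _) hc

noncomputable def theMetric (hX : CountablyCompact X) : MetricSpace C(X, ℝ) where
  dist f g := min 1 (⨆ x, |f x - g x|)
  dist_self f := by
    show min 1 (⨆ x, |f x - f x|) = 0
    simp
  dist_comm f g := by
    show min 1 (⨆ x, |f x - g x|) = min 1 (⨆ x, |g x - f x|)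
    rw [D_comm]
  dist_triangle f g h := by
    show min 1 (⨆ x, |f x - h x|) ≤ min 1 (⨆ x, |f x - g x|) + min 1 (⨆ x, |g x - h x|)
    exact min_triangle' (D_nonneg hX f g) (D_nonneg hX g h) (D_triangle hX f g h)
  eq_of_dist_eq_zero := by
    intro f g h
    replace h : min 1 (⨆ x, |f x - g x|) = 0 := h
    rcases le_total (1:ℝ) (⨆ x, |f x - g x|) with h1 | h1
    · rw [min_eq_left h1] at h; norm_num at h
    · rw [min_eq_right h1] at h
      ext x
      have h2 := le_D hX f g x
      rw [h] at h2
      have h0 : |f x - g x| = 0 := le_antisymm h2 (abs_nonneg _)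
      rw [abs_eq_zero, sub_eq_zero] at h0
      exact h0

lemma graphTop_isOpen_gball {f : C(X, ℝ)} {ε : X → ℝ}
    (hl : LowerSemicontinuous ε) (hp : ∀ x, 0 < ε x) :
    @IsOpen _ (graphTop X) (gball f ε) :=
  TopologicalSpace.GenerateOpen.basic _ ⟨f, ε, hl, hp, rfl⟩

lemma graphTop_isOpen_of_forall {u : Set C(X, ℝ)}
    (h : ∀ g ∈ u, ∃ t, t ⊆ u ∧ @IsOpen _ (graphTop X) t ∧ g ∈ t) :
    @IsOpen _ (graphTop X) u := by
  letI := graphTop X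
  exact isOpen_iff_forall_mem_open.mpr h

end D
end Aux
theorem stmt9 {X : Type*} [TopologicalSpace X] [Nonempty X] [T1Space X]
    [CompletelyRegularSpace X] (hX : CountablyCompact X) :
    ∃ m : MetricSpace C(X, ℝ),
      (∀ f g : C(X, ℝ),
        @dist _ m.toPseudoMetricSpace.toDist f g = min 1 (⨆ x, |f x - g x|)) ∧
      @UniformSpace.toTopologicalSpace _ m.toPseudoMetricSpace.toUniformSpace = graphTop X ∧
      @CompleteSpace C(X, ℝ) m.toPseudoMetricSpace.toUniformSpace := by
  refine ⟨theMetric hX, fun f g => rfl, ?_, ?_⟩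
  · -- topology equality
    letI m := theMetric hX
    refine le_antisymm ?_ ?_
    · -- metric topology ≤ graphTop: every generator is metric-open
      rw [graphTop]
      refine le_generateFrom ?_
      rintro S ⟨f, ε, hlsc, hpos, rfl⟩
      rw [Metric.isOpen_iff]
      intro g hg
      have hlsc' : LowerSemicontinuous fun x => ε x - |f x - g x| := by
        have hcont : Continuous fun x => -|f x - g x| :=
          ((f.continuous.sub g.continuous).abs).neg
        simpa [sub_eq_add_neg] using hlsc.add hcont.lowerSemicontinuous
      have hpos' : ∀ x, 0 < ε x - |f x - g x| := fun x => sub_pos.2 (hg x)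
      obtain ⟨c, hc, hcle⟩ := lsc_pos_bound hX hlsc' hpos'
      refine ⟨min c 1, lt_min hc one_pos, fun h hh => ?_⟩
      rw [Metric.mem_ball] at hh
      have hD : (⨆ x, |h x - g x|) < min c 1 :=
        lt_of_min_one_lt hh (min_le_right _ _)
      intro x
      have h1 : |h x - g x| ≤ ⨆ x, |h x - g x| := le_D hX h g x
      have h2 : |f x - g x| ≤ ε x - c := by
        have := hcle x; linarith
      have h3 : min c 1 ≤ c := min_le_left _ _
      calc |f x - h x| ≤ |f x - g x| + |g x - h x| := abs_sub_le _ _ _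
        _ = |f x - g x| + |h x - g x| := by rw [abs_sub_comm (g x)]
        _ < (ε x - c) + c := by
            have : |h x - g x| < c := lt_of_lt_of_le (lt_of_le_of_lt h1 hD) h3
            linarith
        _ = ε x := by ring
    · -- graphTop ≤ metric topology: every metric-open set is graph-open
      rw [TopologicalSpace.le_def]
      intro u hu
      refine graphTop_isOpen_of_forall fun g hg => ?_
      obtain ⟨r, hr, hball⟩ := Metric.isOpen_iff.1 hu g hg
      set δ : ℝ := min r 1 / 2 with hδdef
      have hδpos : 0 < δ := by positivity
      refine ⟨gball g (fun _ => δ), ?_, ?_, ?_⟩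
      · intro h hh
        apply hball
        have hD : (⨆ x, |h x - g x|) ≤ δ := by
          refine ciSup_le fun x => ?_
          rw [abs_sub_comm]
          exact (hh x).le
        have hle : dist h g ≤ δ := le_trans (min_le_right _ _) hD
        have hδr : δ < r := by
          have := min_le_left r 1
          rw [hδdef]; linarith
        exact Metric.mem_ball.2 (lt_of_le_of_lt hle hδr)
      · exact graphTop_isOpen_gball lowerSemicontinuous_const (fun _ => hδpos)
      · intro x; simpa using hδpos
  · -- completeness
    letI m := theMetric hX
    apply Metric.complete_of_cauchySeq_tendsto
    intro u hu
    have hbnd : ∀ n : ℕ, ∃ C : ℝ, ∀ x y, dist ((u n) x) ((u n) y) ≤ C := by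
      intro n
      obtain ⟨C, hC⟩ := bdd_of_cc hX (u n).continuous.abs
      exact ⟨2 * C, fun x y => by
        rw [Real.dist_eq]
        have := hC x; have := hC y
        have hx := abs_sub ((u n) x) ((u n) y)
        calc |(u n) x - (u n) y| ≤ |(u n) x| + |(u n) y| := abs_sub _ _
          _ ≤ 2 * C := by linarith⟩
    let b : ℕ → BoundedContinuousFunction X ℝ := fun n => ⟨u n, hbnd n⟩
    have hbcauchy : CauchySeq b := by
      rw [Metric.cauchySeq_iff]
      intro ε hε
      obtain ⟨N, hN⟩ := Metric.cauchySeq_iff.1 hu (min (ε / 2) (1 / 2))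
        (lt_min (by linarith) (by norm_num))
      refine ⟨N, fun p hp q hq => ?_⟩
      have hd := hN p hp q hq
      have hD : (⨆ x, |(u p) x - (u q) x|) < min (ε / 2) (1 / 2) :=
        lt_of_min_one_lt hd (le_trans (min_le_right _ _) (by norm_num))
      have : dist (b p) (b q) ≤ ε / 2 := by
        refine (BoundedContinuousFunction.dist_le (by linarith)).2 fun x => ?_
        have h1 : |(u p) x - (u q) x| ≤ ⨆ x, |(u p) x - (u q) x| := le_D hX (u p) (u q) x
        have h2 : min (ε / 2) (1 / 2) ≤ ε / 2 := min_le_left _ _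
        rw [Real.dist_eq]
        show |(u p) x - (u q) x| ≤ ε / 2
        linarith
      linarith
    obtain ⟨g, hg⟩ := cauchySeq_tendsto_of_complete hbcauchy
    refine ⟨g.toContinuousMap, ?_⟩
    rw [Metric.tendsto_atTop]
    intro ε hε
    obtain ⟨N, hN⟩ := (Metric.tendsto_atTop.1 hg) ε hε
    refine ⟨N, fun n hn => ?_⟩
    have hDle : (⨆ x, |(u n) x - g.toContinuousMap x|) ≤ dist (b n) g := by
      refine ciSup_le fun x => ?_
      have := BoundedContinuousFunction.dist_coe_le_dist (f := b n) (g := g) x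
      rw [Real.dist_eq] at this
      exact this
    calc dist (u n) g.toContinuousMap
        ≤ ⨆ x, |(u n) x - g.toContinuousMap x| := min_le_right _ _
      _ ≤ dist (b n) g := hDle
      _ < ε := hN n hn
end

section
/- Let X be a Tychonoff space, D = {xₙ : n ≥ 1} a countably infinite closed discrete subset of X, and L' = {fₙ : n ≥ 1} a countable subset of C(X) with fₙ(x_k) > 0 for all n, k. Then there exists a strictly positive lower semicontinuous function η : X → ℝ such that no fₙ satisfies |fₙ(x)| < η(x) for all x ∈ X; i.e., the basic graph-topology neighborhood B(0, η) of the zero function is disjoint from L'. Consequently the zero function is not in the sequential (countable-set) closure of L' in the graph topology. -/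
theorem stmt16 {X : Type*} [TopologicalSpace X] [T1Space X] [CompletelyRegularSpace X]
    (x : ℕ → X) (hinj : Function.Injective x) (hcl : IsClosed (Set.range x))
    (hd : DiscreteTopology (Set.range x))
    (f : ℕ → C(X, ℝ)) (hf : ∀ n k, 0 < f n (x k)) :
    (∃ η : X → ℝ, LowerSemicontinuous η ∧ (∀ x, 0 < η x) ∧
      ∀ n, ¬ (∀ x' : X, |f n x'| < η x')) ∧
    (0 : C(X, ℝ)) ∉ @closure _ (graphTop X) (Set.range f) := by
  classical
  set η : X → ℝ := fun z => if h : ∃ n, x n = z then min 1 (f h.choose z) else 1 with hη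
  have hpos : ∀ z, 0 < η z := by
    intro z
    by_cases h : ∃ n, x n = z
    · simp only [hη, dif_pos h]
      refine lt_min one_pos ?_
      have := hf h.choose h.choose
      rwa [h.choose_spec] at this
    · simp [hη, dif_neg h]
  have hle1 : ∀ z, η z ≤ 1 := by
    intro z
    by_cases h : ∃ n, x n = z
    · simp only [hη, dif_pos h]; exact min_le_left _ _
    · simp [hη, dif_neg h]
  have hηD : ∀ n, η (x n) ≤ f n (x n) := by
    intro n
    have h : ∃ m, x m = x n := ⟨n, rfl⟩
    have hm : h.choose = n := hinj h.choose_spec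
    simp only [hη, dif_pos h, hm]
    exact min_le_right _ _
  have hlsc : LowerSemicontinuous η := by
    intro x0 y hy
    by_cases hx0 : x0 ∈ Set.range x
    · -- find open U with U ∩ range x ⊆ {x0}
      obtain ⟨n, hn⟩ := hx0
      have hsing : IsOpen ({⟨x0, ⟨n, hn⟩⟩} : Set (Set.range x)) := isOpen_discrete _
      rw [isOpen_induced_iff] at hsing
      obtain ⟨U, hUopen, hU⟩ := hsing
      have hx0U : x0 ∈ U := by
        have : (⟨x0, ⟨n, hn⟩⟩ : Set.range x) ∈ (Subtype.val ⁻¹' U : Set (Set.range x)) := by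
          rw [hU]; rfl
        exact this
      filter_upwards [hUopen.mem_nhds hx0U] with z hz
      by_cases hzr : z ∈ Set.range x
      · have : (⟨z, hzr⟩ : Set.range x) ∈ (Subtype.val ⁻¹' U : Set (Set.range x)) := hz
        rw [hU] at this
        have hz0 : z = x0 := congrArg Subtype.val this
        rwa [hz0]
      · have : η z = 1 := by
          simp only [hη]
          rw [dif_neg]
          rintro ⟨m, hm⟩; exact hzr ⟨m, hm⟩
        rw [this]
        exact lt_of_lt_of_le hy (hle1 x0)
    · have hopen : IsOpen (Set.range x)ᶜ := hcl.isOpen_compl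
      filter_upwards [hopen.mem_nhds hx0] with z hz
      have : η z = 1 := by
        simp only [hη]
        rw [dif_neg]
        rintro ⟨m, hm⟩; exact hz ⟨m, hm⟩
      rw [this]
      exact lt_of_lt_of_le hy (hle1 x0)
  have hmain : ∀ n, ¬ (∀ x' : X, |f n x'| < η x') := by
    intro n h
    have h1 := h (x n)
    have h2 : |f n (x n)| = f n (x n) := abs_of_pos (hf n n)
    rw [h2] at h1
    exact absurd h1 (not_lt.mpr (hηD n))
  refine ⟨⟨η, hlsc, hpos, hmain⟩, ?_⟩
  intro hmem
  letI := graphTop X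
  have hopen : IsOpen (gball 0 η) := by
    apply TopologicalSpace.GenerateOpen.basic
    exact ⟨0, η, hlsc, hpos, rfl⟩
  have h0 : (0 : C(X, ℝ)) ∈ gball 0 η := by
    intro z
    simpa using hpos z
  obtain ⟨g, hg1, hg2⟩ := mem_closure_iff.mp hmem _ hopen h0
  obtain ⟨n, rfl⟩ := hg2
  exact hmain n (fun z => by simpa using hg1 z)
end
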